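/- For p, q ∈ ℂ⁴, one has φ(q) = φ(p) or φ(q) = ν(φ(p)) if and only if q lies in the H-orbit of p, where H is the subgroup of GL₄(ℂ) generated by σ and τ. Consequently φ induces a bijection between the set of H-orbits on ℂ⁴ (i.e. Sym²(ℂ²/±1)) and the set of ℤ/2-orbits on V = {(a, u) ∈ ℂ³ × ℂ³ | Σaᵢ² = Σuᵢ², Σaᵢuᵢ = 0} under (a, u) ↦ (a, −u). -/
import Mathlib


open Matrix Complex

noncomputable section

/-- The matrix of σ(x₁, x₂, y₁, y₂) = (y₁, y₂, x₁, x₂) in coordinates (x₁, x₂, y₁, y₂). -/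
def sigmaM : Matrix (Fin 4) (Fin 4) ℂ :=
  !![0, 0, 1, 0; 0, 0, 0, 1; 1, 0, 0, 0; 0, 1, 0, 0]

/-- The matrix of τ(x₁, x₂, y₁, y₂) = (−x₁, −x₂, y₁, y₂). -/
def tauM : Matrix (Fin 4) (Fin 4) ℂ :=
  !![-1, 0, 0, 0; 0, -1, 0, 0; 0, 0, 1, 0; 0, 0, 0, 1]

lemma sigmaM_mul_sigmaM : sigmaM * sigmaM = 1 := by
  ext i j
  fin_cases i <;> fin_cases j <;>
    simp [sigmaM, Matrix.mul_apply, Fin.sum_univ_four, Matrix.one_apply, Matrix.vecHead, Matrix.vecTail]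

lemma tauM_mul_tauM : tauM * tauM = 1 := by
  ext i j
  fin_cases i <;> fin_cases j <;>
    simp [tauM, Matrix.mul_apply, Fin.sum_univ_four, Matrix.one_apply, Matrix.vecHead, Matrix.vecTail]

/-- σ as an invertible matrix. -/
def sigmaU : (Matrix (Fin 4) (Fin 4) ℂ)ˣ :=
  ⟨sigmaM, sigmaM, sigmaM_mul_sigmaM, sigmaM_mul_sigmaM⟩

/-- τ as an invertible matrix. -/
def tauU : (Matrix (Fin 4) (Fin 4) ℂ)ˣ :=
  ⟨tauM, tauM, tauM_mul_tauM, tauM_mul_tauM⟩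

/-- The subgroup H of GL₄(ℂ) generated by σ and τ. -/
def Hgrp : Subgroup (Matrix (Fin 4) (Fin 4) ℂ)ˣ :=
  Subgroup.closure {sigmaU, tauU}

/-- The map φ(x₁, x₂, y₁, y₂) = (a₁, a₂, a₃, u₁, u₂, u₃), where a point of ℂ⁴ is
a function `p : Fin 4 → ℂ` with x₁ = p 0, x₂ = p 1, y₁ = p 2, y₂ = p 3. -/
def phi (p : Fin 4 → ℂ) : (Fin 3 → ℂ) × (Fin 3 → ℂ) :=
  (![-I * (p 0 ^ 2 + p 2 ^ 2 + p 1 ^ 2 + p 3 ^ 2) / 2,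
     (p 0 ^ 2 + p 2 ^ 2 - p 1 ^ 2 - p 3 ^ 2) / 2,
     p 0 * p 1 + p 2 * p 3],
   ![p 0 * p 2 + p 1 * p 3,
     I * (p 0 * p 2 - p 1 * p 3),
     I * (p 0 * p 3 + p 1 * p 2)])

/-- The involution ν(a, u) = (a, −u). -/
def nuMap (v : (Fin 3 → ℂ) × (Fin 3 → ℂ)) : (Fin 3 → ℂ) × (Fin 3 → ℂ) := (v.1, -v.2)

/-- The affine variety V = {(a, u) | Σaᵢ² = Σuᵢ², Σaᵢuᵢ = 0}. -/
def Vset : Set ((Fin 3 → ℂ) × (Fin 3 → ℂ)) :=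
  {v | v.1 0 ^ 2 + v.1 1 ^ 2 + v.1 2 ^ 2 = v.2 0 ^ 2 + v.2 1 ^ 2 + v.2 2 ^ 2 ∧
       v.1 0 * v.2 0 + v.1 1 * v.2 1 + v.1 2 * v.2 2 = 0}


-- ------------------------------------------------------------------
-- Auxiliary lemmas
-- ------------------------------------------------------------------

lemma mv_sigma (p : Fin 4 → ℂ) : sigmaM *ᵥ p = ![p 2, p 3, p 0, p 1] := by
  funext i; fin_cases i <;> simp [sigmaM, mulVec, dotProduct, Fin.sum_univ_four]

lemma mv_tau (p : Fin 4 → ℂ) : tauM *ᵥ p = ![-p 0, -p 1, p 2, p 3] := by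
  funext i; fin_cases i <;> simp [tauM, mulVec, dotProduct, Fin.sum_univ_four]

lemma sigmaU_mem : sigmaU ∈ Hgrp := Subgroup.subset_closure (by simp)
lemma tauU_mem : tauU ∈ Hgrp := Subgroup.subset_closure (by simp)

lemma sigmaU_val : ((sigmaU : (Matrix (Fin 4) (Fin 4) ℂ)ˣ) : Matrix (Fin 4) (Fin 4) ℂ) = sigmaM := rfl
lemma tauU_val : ((tauU : (Matrix (Fin 4) (Fin 4) ℂ)ˣ) : Matrix (Fin 4) (Fin 4) ℂ) = tauM := rfl

lemma mv2 (A B : Matrix (Fin 4) (Fin 4) ℂ) (p : Fin 4 → ℂ) :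
    (A * B) *ᵥ p = A *ᵥ (B *ᵥ p) := (mulVec_mulVec p A B).symm

lemma act_I (p : Fin 4 → ℂ) :
    ((1 : (Matrix (Fin 4) (Fin 4) ℂ)ˣ) : Matrix (Fin 4) (Fin 4) ℂ) *ᵥ p = ![p 0, p 1, p 2, p 3] := by
  rw [Units.val_one, one_mulVec]; funext i; fin_cases i <;> simp

lemma act_S (p : Fin 4 → ℂ) :
    ((sigmaU : (Matrix (Fin 4) (Fin 4) ℂ)ˣ) : Matrix (Fin 4) (Fin 4) ℂ) *ᵥ p = ![p 2, p 3, p 0, p 1] :=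
  mv_sigma p

lemma act_T (p : Fin 4 → ℂ) :
    ((tauU : (Matrix (Fin 4) (Fin 4) ℂ)ˣ) : Matrix (Fin 4) (Fin 4) ℂ) *ᵥ p = ![-p 0, -p 1, p 2, p 3] :=
  mv_tau p

lemma act_ST (p : Fin 4 → ℂ) :
    ((sigmaU * tauU : (Matrix (Fin 4) (Fin 4) ℂ)ˣ) : Matrix (Fin 4) (Fin 4) ℂ) *ᵥ p
      = ![p 2, p 3, -p 0, -p 1] := by
  simp only [Units.val_mul, sigmaU_val, tauU_val, mv2, mv_tau, mv_sigma]
  funext i; fin_cases i <;> simp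

lemma act_TS (p : Fin 4 → ℂ) :
    ((tauU * sigmaU : (Matrix (Fin 4) (Fin 4) ℂ)ˣ) : Matrix (Fin 4) (Fin 4) ℂ) *ᵥ p
      = ![-p 2, -p 3, p 0, p 1] := by
  simp only [Units.val_mul, sigmaU_val, tauU_val, mv2, mv_tau, mv_sigma]
  funext i; fin_cases i <;> simp

lemma act_TST (p : Fin 4 → ℂ) :
    ((tauU * sigmaU * tauU : (Matrix (Fin 4) (Fin 4) ℂ)ˣ) : Matrix (Fin 4) (Fin 4) ℂ) *ᵥ p
      = ![-p 2, -p 3, -p 0, -p 1] := by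
  simp only [Units.val_mul, sigmaU_val, tauU_val, mv2, mv_tau, mv_sigma]
  funext i; fin_cases i <;> simp

lemma act_STS (p : Fin 4 → ℂ) :
    ((sigmaU * tauU * sigmaU : (Matrix (Fin 4) (Fin 4) ℂ)ˣ) : Matrix (Fin 4) (Fin 4) ℂ) *ᵥ p
      = ![p 0, p 1, -p 2, -p 3] := by
  simp only [Units.val_mul, sigmaU_val, tauU_val, mv2, mv_tau, mv_sigma]
  funext i; fin_cases i <;> simp

lemma act_N (p : Fin 4 → ℂ) :
    ((sigmaU * tauU * sigmaU * tauU : (Matrix (Fin 4) (Fin 4) ℂ)ˣ) : Matrix (Fin 4) (Fin 4) ℂ) *ᵥ p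
      = ![-p 0, -p 1, -p 2, -p 3] := by
  simp only [Units.val_mul, sigmaU_val, tauU_val, mv2, mv_tau, mv_sigma]
  funext i; fin_cases i <;> simp

lemma build (g : (Matrix (Fin 4) (Fin 4) ℂ)ˣ) (hg : g ∈ Hgrp) (p q : Fin 4 → ℂ)
    (v0 v1 v2 v3 : ℂ)
    (hact : (g : Matrix (Fin 4) (Fin 4) ℂ) *ᵥ p = ![v0, v1, v2, v3])
    (h0 : q 0 = v0) (h1 : q 1 = v1) (h2 : q 2 = v2) (h3 : q 3 = v3) :
    ∃ g ∈ Hgrp, q = (g : Matrix (Fin 4) (Fin 4) ℂ) *ᵥ p := by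
  refine ⟨g, hg, ?_⟩
  rw [hact]; funext i; fin_cases i <;> simp [h0, h1, h2, h3]

lemma phiA0 (p : Fin 4 → ℂ) : (phi p).1 0 = -I * (p 0 ^ 2 + p 2 ^ 2 + p 1 ^ 2 + p 3 ^ 2) / 2 := rfl
lemma phiA1 (p : Fin 4 → ℂ) : (phi p).1 1 = (p 0 ^ 2 + p 2 ^ 2 - p 1 ^ 2 - p 3 ^ 2) / 2 := rfl
lemma phiA2 (p : Fin 4 → ℂ) : (phi p).1 2 = p 0 * p 1 + p 2 * p 3 := rfl
lemma phiU0 (p : Fin 4 → ℂ) : (phi p).2 0 = p 0 * p 2 + p 1 * p 3 := rfl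
lemma phiU1 (p : Fin 4 → ℂ) : (phi p).2 1 = I * (p 0 * p 2 - p 1 * p 3) := rfl
lemma phiU2 (p : Fin 4 → ℂ) : (phi p).2 2 = I * (p 0 * p 3 + p 1 * p 2) := rfl
lemma nuA (v : (Fin 3 → ℂ) × (Fin 3 → ℂ)) (j : Fin 3) : (nuMap v).1 j = v.1 j := rfl
lemma nuU (v : (Fin 3 → ℂ) × (Fin 3 → ℂ)) (j : Fin 3) : (nuMap v).2 j = -(v.2 j) := rfl
lemma nu_nu (v : (Fin 3 → ℂ) × (Fin 3 → ℂ)) : nuMap (nuMap v) = v := by simp [nuMap]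

lemma phi_sigma (p : Fin 4 → ℂ) : phi (sigmaM *ᵥ p) = phi p := by
  rw [mv_sigma]; unfold phi
  refine Prod.ext ?_ ?_ <;> funext i <;> fin_cases i <;> simp <;> ring

lemma phi_tau (p : Fin 4 → ℂ) : phi (tauM *ᵥ p) = nuMap (phi p) := by
  rw [mv_tau]; unfold phi nuMap
  refine Prod.ext ?_ ?_ <;> funext i <;> fin_cases i <;> simp <;> ring

lemma back {g : (Matrix (Fin 4) (Fin 4) ℂ)ˣ} (hg : g ∈ Hgrp) :
    ∀ p : Fin 4 → ℂ, phi ((g : Matrix (Fin 4) (Fin 4) ℂ) *ᵥ p) = phi p ∨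
      phi ((g : Matrix (Fin 4) (Fin 4) ℂ) *ᵥ p) = nuMap (phi p) := by
  induction hg using Subgroup.closure_induction with
  | mem x hx =>
      simp only [Set.mem_insert_iff, Set.mem_singleton_iff] at hx
      rcases hx with rfl | rfl
      · exact fun p => Or.inl (phi_sigma p)
      · exact fun p => Or.inr (phi_tau p)
  | one => exact fun p => Or.inl (by rw [Units.val_one, one_mulVec])
  | mul x y hx hy ihx ihy =>
      intro p
      rw [Units.val_mul, mv2]
      rcases ihx ((y : Matrix (Fin 4) (Fin 4) ℂ) *ᵥ p) with h2 | h2 <;>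
        rcases ihy p with h1 | h1
      · exact Or.inl (by rw [h2, h1])
      · exact Or.inr (by rw [h2, h1])
      · exact Or.inr (by rw [h2, h1])
      · exact Or.inl (by rw [h2, h1, nu_nu])
  | inv x hx ih =>
      intro p
      have h := ih (((x⁻¹ : (Matrix (Fin 4) (Fin 4) ℂ)ˣ) : Matrix (Fin 4) (Fin 4) ℂ) *ᵥ p)
      rw [← mv2, ← Units.val_mul, mul_inv_cancel, Units.val_one, one_mulVec] at h
      rcases h with h | h
      · exact Or.inl h.symm
      · exact Or.inr (by rw [h, nu_nu])

lemma pairSq {a b a' b' : ℂ} (h1 : a' ^ 2 = a ^ 2) (h2 : a' * b' = a * b)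
    (h3 : b' ^ 2 = b ^ 2) : (a' = a ∧ b' = b) ∨ (a' = -a ∧ b' = -b) := by
  rcases eq_or_ne a 0 with rfl | ha
  · have ha' : a' = 0 := by
      have : a' ^ 2 = 0 := by simpa using h1
      exact pow_eq_zero_iff two_ne_zero |>.mp this
    have hb : (b' - b) * (b' + b) = 0 := by linear_combination h3
    rcases mul_eq_zero.mp hb with h | h
    · exact Or.inl ⟨by simp [ha'], by linear_combination h⟩
    · exact Or.inr ⟨by simp [ha'], by linear_combination h⟩
  · have hb : (a' - a) * (a' + a) = 0 := by linear_combination h1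
    rcases mul_eq_zero.mp hb with h | h
    · have haa : a' = a := by linear_combination h
      exact Or.inl ⟨haa, mul_left_cancel₀ ha (by linear_combination h2 - b' * haa)⟩
    · have haa : a' = -a := by linear_combination h
      refine Or.inr ⟨haa, mul_left_cancel₀ ha ?_⟩
      linear_combination -h2 + b' * h

lemma rank1 (A B C : ℂ) (h : A * C = B ^ 2) :
    ∃ f1 f2 : ℂ, f1 ^ 2 = A ∧ f1 * f2 = B ∧ f2 ^ 2 = C := by
  rcases eq_or_ne A 0 with rfl | hA
  · have hB : B = 0 := by
      have : B ^ 2 = 0 := by linear_combination -h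
      exact pow_eq_zero_iff two_ne_zero |>.mp this
    obtain ⟨f2, hf2⟩ := IsAlgClosed.exists_pow_nat_eq C (n := 2) (by norm_num)
    exact ⟨0, f2, by simp, by simp [hB], hf2⟩
  · obtain ⟨f1, hf1⟩ := IsAlgClosed.exists_pow_nat_eq A (n := 2) (by norm_num)
    have hf1ne : f1 ≠ 0 := by
      rintro rfl; exact hA (by simpa using hf1.symm)
    refine ⟨f1, B / f1, hf1, by field_simp, ?_⟩
    field_simp
    linear_combination -h - C * hf1

lemma keyfwd (p q : Fin 4 → ℂ)
    (h : phi q = phi p ∨ phi q = nuMap (phi p)) :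
    ∃ g ∈ Hgrp, q = (g : Matrix (Fin 4) (Fin 4) ℂ) *ᵥ p := by
  have hI2 : (-I/2 : ℂ) ≠ 0 := by simp [Complex.I_ne_zero]
  obtain ⟨s, hs, hSum, hDiff, hC, h4, h5, h6⟩ :
      ∃ s : ℂ, (s = 1 ∨ s = -1) ∧
        q 0 ^ 2 + q 2 ^ 2 + q 1 ^ 2 + q 3 ^ 2 = p 0 ^ 2 + p 2 ^ 2 + p 1 ^ 2 + p 3 ^ 2 ∧
        q 0 ^ 2 + q 2 ^ 2 - q 1 ^ 2 - q 3 ^ 2 = p 0 ^ 2 + p 2 ^ 2 - p 1 ^ 2 - p 3 ^ 2 ∧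
        q 0 * q 1 + q 2 * q 3 = p 0 * p 1 + p 2 * p 3 ∧
        q 0 * q 2 + q 1 * q 3 = s * (p 0 * p 2 + p 1 * p 3) ∧
        q 0 * q 2 - q 1 * q 3 = s * (p 0 * p 2 - p 1 * p 3) ∧
        q 0 * q 3 + q 1 * q 2 = s * (p 0 * p 3 + p 1 * p 2) := by
    rcases h with hh | hh
    · have c0 := congrFun (congrArg Prod.fst hh) 0
      have c1 := congrFun (congrArg Prod.fst hh) 1
      have c2 := congrFun (congrArg Prod.fst hh) 2
      have d0 := congrFun (congrArg Prod.snd hh) 0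
      have d1 := congrFun (congrArg Prod.snd hh) 1
      have d2 := congrFun (congrArg Prod.snd hh) 2
      rw [phiA0, phiA0] at c0
      rw [phiA1, phiA1] at c1
      rw [phiA2, phiA2] at c2
      rw [phiU0, phiU0] at d0
      rw [phiU1, phiU1] at d1
      rw [phiU2, phiU2] at d2
      exact ⟨1, Or.inl rfl, mul_left_cancel₀ hI2 (by linear_combination c0),
        by linear_combination 2*c1, c2, by linear_combination d0,
        mul_left_cancel₀ Complex.I_ne_zero (by linear_combination d1),
        mul_left_cancel₀ Complex.I_ne_zero (by linear_combination d2)⟩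
    · have c0 := congrFun (congrArg Prod.fst hh) 0
      have c1 := congrFun (congrArg Prod.fst hh) 1
      have c2 := congrFun (congrArg Prod.fst hh) 2
      have d0 := congrFun (congrArg Prod.snd hh) 0
      have d1 := congrFun (congrArg Prod.snd hh) 1
      have d2 := congrFun (congrArg Prod.snd hh) 2
      rw [phiA0, nuA, phiA0] at c0
      rw [phiA1, nuA, phiA1] at c1
      rw [phiA2, nuA, phiA2] at c2
      rw [phiU0, nuU, phiU0] at d0
      rw [phiU1, nuU, phiU1] at d1
      rw [phiU2, nuU, phiU2] at d2
      exact ⟨-1, Or.inr rfl, mul_left_cancel₀ hI2 (by linear_combination c0),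
        by linear_combination 2*c1, c2, by linear_combination d0,
        mul_left_cancel₀ Complex.I_ne_zero (by linear_combination d1),
        mul_left_cancel₀ Complex.I_ne_zero (by linear_combination d2)⟩
  rcases hs with rfl | rfl
  · have hF11 : (q 0 + q 2) ^ 2 = (p 0 + p 2) ^ 2 := by
      linear_combination (hSum + hDiff)/2 + (h4 + h5)
    have hF12 : (q 0 + q 2) * (q 1 + q 3) = (p 0 + p 2) * (p 1 + p 3) := by
      linear_combination hC + h6
    have hF22 : (q 1 + q 3) ^ 2 = (p 1 + p 3) ^ 2 := by
      linear_combination (hSum - hDiff)/2 + (h4 - h5)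
    have hG11 : (q 0 - q 2) ^ 2 = (p 0 - p 2) ^ 2 := by
      linear_combination (hSum + hDiff)/2 - (h4 + h5)
    have hG12 : (q 0 - q 2) * (q 1 - q 3) = (p 0 - p 2) * (p 1 - p 3) := by
      linear_combination hC - h6
    have hG22 : (q 1 - q 3) ^ 2 = (p 1 - p 3) ^ 2 := by
      linear_combination (hSum - hDiff)/2 - (h4 - h5)
    rcases pairSq hF11 hF12 hF22 with ⟨hFa, hFb⟩ | ⟨hFa, hFb⟩ <;>
      rcases pairSq hG11 hG12 hG22 with ⟨hGa, hGb⟩ | ⟨hGa, hGb⟩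
    · exact build 1 (one_mem _) p q _ _ _ _ (act_I p)
        (by linear_combination (hFa + hGa)/2) (by linear_combination (hFb + hGb)/2)
        (by linear_combination (hFa - hGa)/2) (by linear_combination (hFb - hGb)/2)
    · exact build sigmaU sigmaU_mem p q _ _ _ _ (act_S p)
        (by linear_combination (hFa + hGa)/2) (by linear_combination (hFb + hGb)/2)
        (by linear_combination (hFa - hGa)/2) (by linear_combination (hFb - hGb)/2)
    · exact build (tauU * sigmaU * tauU) (mul_mem (mul_mem tauU_mem sigmaU_mem) tauU_mem)
        p q _ _ _ _ (act_TST p)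
        (by linear_combination (hFa + hGa)/2) (by linear_combination (hFb + hGb)/2)
        (by linear_combination (hFa - hGa)/2) (by linear_combination (hFb - hGb)/2)
    · exact build (sigmaU * tauU * sigmaU * tauU)
        (mul_mem (mul_mem (mul_mem sigmaU_mem tauU_mem) sigmaU_mem) tauU_mem)
        p q _ _ _ _ (act_N p)
        (by linear_combination (hFa + hGa)/2) (by linear_combination (hFb + hGb)/2)
        (by linear_combination (hFa - hGa)/2) (by linear_combination (hFb - hGb)/2)
  · have hF11 : (q 0 + q 2) ^ 2 = (p 0 - p 2) ^ 2 := by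
      linear_combination (hSum + hDiff)/2 + (h4 + h5)
    have hF12 : (q 0 + q 2) * (q 1 + q 3) = (p 0 - p 2) * (p 1 - p 3) := by
      linear_combination hC + h6
    have hF22 : (q 1 + q 3) ^ 2 = (p 1 - p 3) ^ 2 := by
      linear_combination (hSum - hDiff)/2 + (h4 - h5)
    have hG11 : (q 0 - q 2) ^ 2 = (p 0 + p 2) ^ 2 := by
      linear_combination (hSum + hDiff)/2 - (h4 + h5)
    have hG12 : (q 0 - q 2) * (q 1 - q 3) = (p 0 + p 2) * (p 1 + p 3) := by
      linear_combination hC - h6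
    have hG22 : (q 1 - q 3) ^ 2 = (p 1 + p 3) ^ 2 := by
      linear_combination (hSum - hDiff)/2 - (h4 - h5)
    rcases pairSq hF11 hF12 hF22 with ⟨hFa, hFb⟩ | ⟨hFa, hFb⟩ <;>
      rcases pairSq hG11 hG12 hG22 with ⟨hGa, hGb⟩ | ⟨hGa, hGb⟩
    · exact build (sigmaU * tauU * sigmaU)
        (mul_mem (mul_mem sigmaU_mem tauU_mem) sigmaU_mem) p q _ _ _ _ (act_STS p)
        (by linear_combination (hFa + hGa)/2) (by linear_combination (hFb + hGb)/2)
        (by linear_combination (hFa - hGa)/2) (by linear_combination (hFb - hGb)/2)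
    · exact build (tauU * sigmaU) (mul_mem tauU_mem sigmaU_mem) p q _ _ _ _ (act_TS p)
        (by linear_combination (hFa + hGa)/2) (by linear_combination (hFb + hGb)/2)
        (by linear_combination (hFa - hGa)/2) (by linear_combination (hFb - hGb)/2)
    · exact build (sigmaU * tauU) (mul_mem sigmaU_mem tauU_mem) p q _ _ _ _ (act_ST p)
        (by linear_combination (hFa + hGa)/2) (by linear_combination (hFb + hGb)/2)
        (by linear_combination (hFa - hGa)/2) (by linear_combination (hFb - hGb)/2)
    · exact build tauU tauU_mem p q _ _ _ _ (act_T p)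
        (by linear_combination (hFa + hGa)/2) (by linear_combination (hFb + hGb)/2)
        (by linear_combination (hFa - hGa)/2) (by linear_combination (hFb - hGb)/2)

lemma phi_mem_V (p : Fin 4 → ℂ) : phi p ∈ Vset := by
  refine ⟨?_, ?_⟩
  · show (-I * (p 0 ^ 2 + p 2 ^ 2 + p 1 ^ 2 + p 3 ^ 2) / 2) ^ 2
        + ((p 0 ^ 2 + p 2 ^ 2 - p 1 ^ 2 - p 3 ^ 2) / 2) ^ 2
        + (p 0 * p 1 + p 2 * p 3) ^ 2
      = (p 0 * p 2 + p 1 * p 3) ^ 2 + (I * (p 0 * p 2 - p 1 * p 3)) ^ 2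
        + (I * (p 0 * p 3 + p 1 * p 2)) ^ 2
    linear_combination ((p 0 ^ 2 + p 2 ^ 2 + p 1 ^ 2 + p 3 ^ 2) ^ 2 / 4
      - (p 0 * p 2 - p 1 * p 3) ^ 2 - (p 0 * p 3 + p 1 * p 2) ^ 2) * Complex.I_sq
  · show (-I * (p 0 ^ 2 + p 2 ^ 2 + p 1 ^ 2 + p 3 ^ 2) / 2) * (p 0 * p 2 + p 1 * p 3)
        + ((p 0 ^ 2 + p 2 ^ 2 - p 1 ^ 2 - p 3 ^ 2) / 2) * (I * (p 0 * p 2 - p 1 * p 3))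
        + (p 0 * p 1 + p 2 * p 3) * (I * (p 0 * p 3 + p 1 * p 2)) = 0
    ring

lemma exists_phi_eq (v : (Fin 3 → ℂ) × (Fin 3 → ℂ)) (hv : v ∈ Vset) : ∃ p, phi p = v := by
  obtain ⟨hv1, hv2⟩ := hv
  obtain ⟨f1, f2, H1, H3, H2⟩ := rank1 (I*(v.1 0) + v.1 1 + v.2 0 - I*(v.2 1))
    (v.1 2 - I*(v.2 2)) (I*(v.1 0) - v.1 1 + v.2 0 + I*(v.2 1))
    (by linear_combination (-1 : ℂ) * hv1 + 2*I*hv2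
          + ((v.1 0)^2 - (v.2 1)^2 - (v.2 2)^2) * Complex.I_sq)
  obtain ⟨g1, g2, K1, K3, K2⟩ := rank1 (I*(v.1 0) + v.1 1 - v.2 0 + I*(v.2 1))
    (v.1 2 + I*(v.2 2)) (I*(v.1 0) - v.1 1 - v.2 0 - I*(v.2 1))
    (by linear_combination (-1 : ℂ) * hv1 - 2*I*hv2
          + ((v.1 0)^2 - (v.2 1)^2 - (v.2 2)^2) * Complex.I_sq)
  refine ⟨![(f1+g1)/2, (f2+g2)/2, (f1-g1)/2, (f2-g2)/2], ?_⟩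
  refine Prod.ext ?_ ?_ <;> funext j <;> fin_cases j
  · show -I * (((f1+g1)/2) ^ 2 + ((f1-g1)/2) ^ 2 + ((f2+g2)/2) ^ 2 + ((f2-g2)/2) ^ 2) / 2 = v.1 0
    linear_combination (-I/4) * (H1 + H2 + K1 + K2) - (v.1 0) * Complex.I_sq
  · show (((f1+g1)/2) ^ 2 + ((f1-g1)/2) ^ 2 - ((f2+g2)/2) ^ 2 - ((f2-g2)/2) ^ 2) / 2 = v.1 1
    linear_combination (H1 + K1 - H2 - K2)/4
  · show ((f1+g1)/2) * ((f2+g2)/2) + ((f1-g1)/2) * ((f2-g2)/2) = v.1 2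
    linear_combination (H3 + K3)/2
  · show ((f1+g1)/2) * ((f1-g1)/2) + ((f2+g2)/2) * ((f2-g2)/2) = v.2 0
    linear_combination (H1 - K1 + H2 - K2)/4
  · show I * (((f1+g1)/2) * ((f1-g1)/2) - ((f2+g2)/2) * ((f2-g2)/2)) = v.2 1
    linear_combination (I/4) * (H1 - H2 - K1 + K2) - (v.2 1) * Complex.I_sq
  · show I * (((f1+g1)/2) * ((f2-g2)/2) + ((f2+g2)/2) * ((f1-g1)/2)) = v.2 2
    linear_combination (I/2) * (H3 - K3) - (v.2 2) * Complex.I_sq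

theorem stmt16 :
    -- φ separates exactly the H-orbits, up to the ℤ/2-action ν:
    (∀ p q : Fin 4 → ℂ,
      (phi q = phi p ∨ phi q = nuMap (phi p)) ↔
        ∃ g ∈ Hgrp, q = (g : Matrix (Fin 4) (Fin 4) ℂ).mulVec p) ∧
    -- hence p ↦ {φ(p), ν(φ(p))} identifies H-orbits with ℤ/2-orbits:
    (∀ p q : Fin 4 → ℂ,
      ({phi p, nuMap (phi p)} : Set ((Fin 3 → ℂ) × (Fin 3 → ℂ))) =
          {phi q, nuMap (phi q)} ↔
        ∃ g ∈ Hgrp, q = (g : Matrix (Fin 4) (Fin 4) ℂ).mulVec p) ∧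
    -- and its image is exactly the set of ℤ/2-orbits of points of V:
    Set.range (fun p : Fin 4 → ℂ =>
        ({phi p, nuMap (phi p)} : Set ((Fin 3 → ℂ) × (Fin 3 → ℂ)))) =
      {S | ∃ v ∈ Vset, S = {v, nuMap v}} := by
  have part1 : ∀ p q : Fin 4 → ℂ,
      (phi q = phi p ∨ phi q = nuMap (phi p)) ↔
        ∃ g ∈ Hgrp, q = (g : Matrix (Fin 4) (Fin 4) ℂ).mulVec p := by
    intro p q
    constructor
    · exact keyfwd p q
    · rintro ⟨g, hg, rfl⟩
      exact back hg p
  refine ⟨part1, ?_, ?_⟩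
  · intro p q
    constructor
    · intro h
      apply (part1 p q).mp
      have hmem : phi q ∈ ({phi p, nuMap (phi p)} : Set ((Fin 3 → ℂ) × (Fin 3 → ℂ))) := by
        rw [h]; exact Set.mem_insert _ _
      simpa using hmem
    · intro h
      rcases (part1 p q).mpr h with h1 | h1
      · rw [h1]
      · rw [h1, nu_nu]
        exact Set.pair_comm _ _
  · ext S
    simp only [Set.mem_range, Set.mem_setOf_eq]
    constructor
    · rintro ⟨p, rfl⟩
      exact ⟨phi p, phi_mem_V p, rfl⟩
    · rintro ⟨v, hv, rfl⟩
      obtain ⟨p, hp⟩ := exists_phi_eq v hv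
      exact ⟨p, by rw [hp]⟩
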